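/- arXiv:1508.05416 — 6 statements merged into one kernel-verified Lean document; each statement's English description precedes it below -/
import Mathlib

section
/- Let a < b be real numbers and define P(z) = (i/π)(log(z−a) − log(z−b)) for z in the upper half-plane ℍ, using principal branch logarithms. Then P maps ℍ one-to-one onto the vertical strip S = {z : 0 < Re z < 1}. -/
open Set Complex

/-!
`P` factors through `z ↦ (z - a) / (z - b)`, a real Möbius map of negative determinant, which
carries the upper half-plane onto the lower one; the principal logarithm maps the lower
half-plane onto the strip `-π < Im < 0`, and `ζ ↦ (i/π) ζ` turns that strip into `0 < Re < 1`.
The difference of logarithms is the logarithm of the quotient because both arguments lie in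
`(0, π)`.
-/

lemma im_div_affine (α β γ δ : ℝ) (z : ℂ) :
    ((α * z + β) / (γ * z + δ)).im = (α * δ - β * γ) * z.im / normSq (γ * z + δ) := by
  rw [div_im]
  simp only [add_re, add_im, mul_re, mul_im, ofReal_re, ofReal_im]
  ring

lemma im_div_affine_mul_im_neg {α β γ δ : ℝ} (hdet : α * δ - β * γ < 0) (hγ : γ ≠ 0)
    {z : ℂ} (hz : z.im ≠ 0) : ((α * z + β) / (γ * z + δ)).im * z.im < 0 := by
  have hden : γ * z + δ ≠ 0 := fun h => by
    have := congrArg im h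
    simp only [add_im, mul_im, ofReal_re, ofReal_im, zero_mul, add_zero, zero_im] at this
    exact mul_ne_zero hγ hz this
  rw [im_div_affine, div_mul_eq_mul_div, mul_assoc]
  exact div_neg_of_neg_of_pos (mul_neg_of_neg_of_pos hdet (mul_self_pos.2 hz))
    (normSq_pos.2 hden)

lemma sub_ofReal_ne_zero {t : ℂ} (ht : t.im ≠ 0) (r : ℝ) : t - r ≠ 0 :=
  fun h => ht (by simpa using congrArg im h)

lemma bijOn_div_sub_sub {a b : ℝ} (hab : a < b) :
    BijOn (fun z : ℂ => (z - a) / (z - b)) {z | 0 < z.im} {q | q.im < 0} := by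
  have hba : (b : ℂ) - a ≠ 0 := sub_ne_zero.2 (ofReal_injective.ne hab.ne')
  refine InvOn.bijOn (f' := fun q => (b * q - a) / (q - 1)) ⟨fun z hz => ?_, fun q hq => ?_⟩
    (fun z hz => ?_) (fun q hq => ?_)
  · have hzb := sub_ofReal_ne_zero (ne_of_gt hz) b
    have h1 : (z - a) / (z - b) - 1 = (b - a) / (z - b) := by field_simp; ring
    simp only
    rw [h1, div_eq_iff (div_ne_zero hba hzb)]
    field_simp
    ring
  · have hq1 := sub_ofReal_ne_zero (ne_of_lt hq) 1
    rw [ofReal_one] at hq1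
    have h1 : (b * q - a) / (q - 1) - b = (b - a) / (q - 1) := by field_simp; ring
    simp only
    rw [h1, div_eq_iff (div_ne_zero hba hq1)]
    field_simp
    ring
  · have h := im_div_affine_mul_im_neg (α := 1) (β := -a) (δ := -b) (by linarith) one_ne_zero
      (ne_of_gt hz)
    have e : (z - a) / (z - b) = ((1 : ℝ) * z + (-a : ℝ)) / ((1 : ℝ) * z + (-b : ℝ)) := by
      push_cast; ring
    show ((z - a) / (z - b)).im < 0
    exact e ▸ neg_of_mul_neg_left h hz.le
  · have h := im_div_affine_mul_im_neg (α := b) (β := -a) (δ := -1) (by linarith) one_ne_zero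
      (ne_of_lt hq)
    have e : (b * q - a) / (q - 1) = ((b : ℝ) * q + (-a : ℝ)) / ((1 : ℝ) * q + (-1 : ℝ)) := by
      push_cast; ring
    show 0 < ((b * q - a) / (q - 1)).im
    exact e ▸ pos_of_mul_neg_left h hq.le

lemma bijOn_log_lowerHalfPlane :
    BijOn log {q : ℂ | q.im < 0} {ζ | -Real.pi < ζ.im ∧ ζ.im < 0} := by
  refine InvOn.bijOn (f' := exp) ⟨fun q hq => ?_, fun ζ hζ => ?_⟩ (fun q hq => ?_) (fun ζ hζ => ?_)
  · exact exp_log fun h => by simp [h] at hq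
  · exact log_exp hζ.1 (by linarith [hζ.2, Real.pi_pos])
  · show -Real.pi < (log q).im ∧ (log q).im < 0
    rw [log_im]
    exact ⟨neg_pi_lt_arg q, arg_neg_iff.2 hq⟩
  · show (exp ζ).im < 0
    rw [exp_im]
    exact mul_neg_of_pos_of_neg (Real.exp_pos _) (Real.sin_neg_of_neg_of_neg_pi_lt hζ.2 hζ.1)

lemma bijOn_I_div_mul {c : ℝ} (hc : 0 < c) :
    BijOn (fun ζ : ℂ => I / c * ζ) {ζ | -c < ζ.im ∧ ζ.im < 0} {w | 0 < w.re ∧ w.re < 1} := by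
  have hc' : (c : ℂ) ≠ 0 := ofReal_ne_zero.2 hc.ne'
  refine InvOn.bijOn (f' := fun w => -c * I * w) ⟨fun ζ _ => ?_, fun w _ => ?_⟩
    (fun ζ hζ => ?_) (fun w hw => ?_)
  · calc -c * I * (I / c * ζ) = -(I * I) * (c / c) * ζ := by ring
      _ = ζ := by rw [I_mul_I, div_self hc']; ring
  · calc I / c * (-c * I * w) = -(I * I) * (c / c) * w := by ring
      _ = w := by rw [I_mul_I, div_self hc']; ring
  · have hre : (I / c * ζ).re = -ζ.im / c := by
      rw [div_mul_eq_mul_div, div_ofReal_re, I_mul_re]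
    show 0 < (I / c * ζ).re ∧ (I / c * ζ).re < 1
    rw [hre, lt_div_iff₀ hc, div_lt_one hc]
    constructor <;> linarith [hζ.1, hζ.2]
  · have him : (-c * I * w).im = -c * w.re := by simp
    show -c < (-c * I * w).im ∧ (-c * I * w).im < 0
    rw [him]
    constructor <;> nlinarith [hw.1, hw.2]

lemma log_div_eq_sub_log_of_im_pos {u v : ℂ} (hu : 0 < u.im) (hv : 0 < v.im) :
    log (u / v) = log u - log v := by
  have hexp : exp (log u - log v) = u / v := by
    rw [exp_sub, exp_log (ne_of_apply_ne im hu.ne'), exp_log (ne_of_apply_ne im hv.ne')]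
  have hargu : 0 ≤ arg u := arg_nonneg_iff.2 hu.le
  have hargv : 0 ≤ arg v := arg_nonneg_iff.2 hv.le
  have hargv' : arg v < Real.pi := arg_lt_pi_iff.2 (Or.inr hv.ne')
  rw [← hexp, log_exp] <;> simp only [sub_im, log_im] <;> linarith [arg_le_pi u]

/-- For real `a < b`, the function `P(z) = (i/π)(log(z-a) - log(z-b))`, with principal
branch logarithms, maps the upper half-plane one-to-one onto the vertical strip
`{z : 0 < Re z < 1}`. -/
theorem log_diff_maps_halfplane_onto_strip (a b : ℝ) (hab : a < b) :
    Set.BijOn (fun z : ℂ => (Complex.I / (Real.pi : ℂ)) *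
        (Complex.log (z - a) - Complex.log (z - b)))
      {z : ℂ | 0 < z.im} {w : ℂ | 0 < w.re ∧ w.re < 1} := by
  refine ((bijOn_I_div_mul Real.pi_pos).comp
    (bijOn_log_lowerHalfPlane.comp (bijOn_div_sub_sub hab))).congr fun z hz => ?_
  have him : ∀ r : ℝ, 0 < (z - r).im := fun r => by simpa using hz
  simp only [Function.comp_apply, log_div_eq_sub_log_of_im_pos (him a) (him b)]
end

section
/- Let b, η, T > 0, let N ≥ 3 be an integer, and let X ⊂ [0,b] be measurable with λ₁(X ∩ W) ≤ ηb/(N(1+log N)) for every interval W of length b/N. Then for every x ∈ [0,b], |P(X, x + (Tbη/N)i)| ≤ (1/π)(3/T + 2η), where P(X,z) = (i/π)∫_X dt/(z−t). -/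
open Set MeasureTheory Complex

/-!
Write `z = x + iy`. Cut `[x - b, x + b] ⊇ X` into the annuli `{t : jd ≤ |t - x| ≤ (j+1)d}`,
`j < N`, `d = b/N`; each is two windows of length `d`, so meets `X` in measure at most `2m`, and
on it `|z - t| ≥ max(y, jd)`. Hence `∫_X |z - t|⁻¹ dt ≤ 2m (1/y + H_{N-1}/d)`, and with
`H_{N-1} ≤ 1 + log N` the choices of `y` and `m` make this at most `2/T + 2η`.
-/

/-- The Poisson-type integral `P(X,z) = (i/π) ∫_X dt/(z-t)`. -/
noncomputable def P (X : Set ℝ) (z : ℂ) : ℂ :=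
  (Complex.I / (Real.pi : ℂ)) * ∫ t in X, (z - (t : ℂ))⁻¹

theorem setLIntegral_le_sum_mul_measure {α ι : Type*} [MeasurableSpace α] {μ : Measure α}
    {s : Set α} (I : Finset ι) {W : ι → Set α} (hs : s ⊆ ⋃ i ∈ I, W i) {f : α → ENNReal}
    {c : ι → ENNReal} (hf : ∀ i ∈ I, ∀ t ∈ s ∩ W i, f t ≤ c i) :
    ∫⁻ t in s, f t ∂μ ≤ ∑ i ∈ I, c i * μ (s ∩ W i) := by
  have hcover : s ⊆ ⋃ i : I, s ∩ W i := fun t ht => by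
    obtain ⟨i, hi, hti⟩ := mem_iUnion₂.1 (hs ht)
    exact mem_iUnion.2 ⟨⟨i, hi⟩, ht, hti⟩
  calc ∫⁻ t in s, f t ∂μ ≤ ∫⁻ t in ⋃ i : I, s ∩ W i, f t ∂μ := lintegral_mono_set hcover
    _ ≤ ∑' i : I, ∫⁻ t in s ∩ W i, f t ∂μ := lintegral_iUnion_le _ _
    _ = ∑ i ∈ I, ∫⁻ t in s ∩ W i, f t ∂μ :=
        Finset.tsum_subtype I fun i => ∫⁻ t in s ∩ W i, f t ∂μ
    _ ≤ ∑ i ∈ I, c i * μ (s ∩ W i) := Finset.sum_le_sum fun i hi =>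
        (setLIntegral_mono measurable_const (hf i hi)).trans_eq (setLIntegral_const _ _)

theorem exists_lt_mem_Icc_mul_add {d r : ℝ} {N : ℕ} (hd : 0 < d) (hr : 0 ≤ r)
    (hrN : r ≤ N * d) (hN : 0 < N) : ∃ j < N, r ∈ Icc (j * d) (j * d + d) := by
  by_cases hfloor : ⌊r / d⌋₊ < N
  · refine ⟨⌊r / d⌋₊, hfloor, ?_, ?_⟩
    · exact (le_div_iff₀ hd).1 (Nat.floor_le (div_nonneg hr hd.le))
    · have := (div_lt_iff₀ hd).1 (Nat.lt_floor_add_one (r / d))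
      linarith
  · refine ⟨N - 1, Nat.sub_lt hN one_pos, ?_, ?_⟩
    · have hN' : (N : ℝ) ≤ r / d :=
        (Nat.cast_le.2 (not_lt.1 hfloor)).trans (Nat.floor_le (div_nonneg hr hd.le))
      rw [Nat.cast_pred hN]
      nlinarith [(le_div_iff₀ hd).1 hN']
    · rw [Nat.cast_pred hN]
      linarith

theorem volume_inter_abs_sub_mem_Icc_le {X : Set ℝ} {x a d m : ℝ}
    (hwin : ∀ w : ℝ, volume (X ∩ Icc w (w + d)) ≤ ENNReal.ofReal m) :
    volume (X ∩ {t | |t - x| ∈ Icc a (a + d)}) ≤ 2 * ENNReal.ofReal m := by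
  have hsplit : X ∩ {t | |t - x| ∈ Icc a (a + d)} ⊆
      X ∩ Icc (x - (a + d)) (x - (a + d) + d) ∪ X ∩ Icc (x + a) (x + a + d) := by
    rintro t ⟨htX, hlo, hhi⟩
    rcases le_total 0 (t - x) with h | h
    · rw [abs_of_nonneg h] at hlo hhi
      exact Or.inr ⟨htX, by constructor <;> linarith⟩
    · rw [abs_of_nonpos h] at hlo hhi
      exact Or.inl ⟨htX, by constructor <;> linarith⟩
  calc volume (X ∩ {t | |t - x| ∈ Icc a (a + d)})
      ≤ volume (X ∩ Icc (x - (a + d)) (x - (a + d) + d)) +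
          volume (X ∩ Icc (x + a) (x + a + d)) :=
        (measure_mono hsplit).trans (measure_union_le _ _)
    _ ≤ 2 * ENNReal.ofReal m := by rw [two_mul]; exact add_le_add (hwin _) (hwin _)

theorem norm_inv_sub_le_inv_max {x y a t : ℝ} (hy : 0 < y) (ht : a ≤ |t - x|) :
    ‖((x : ℂ) + y * I - t)⁻¹‖ ≤ (max y a)⁻¹ := by
  set w : ℂ := (x : ℂ) + y * I - t
  have him : y ≤ ‖w‖ := by
    simpa [w, abs_of_pos hy] using abs_im_le_norm w
  have hre : a ≤ ‖w‖ := by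
    refine ht.trans ?_
    simpa [w, abs_sub_comm] using abs_re_le_norm w
  rw [norm_inv]
  exact inv_anti₀ (lt_max_of_lt_left hy) (max_le him hre)

theorem sum_range_inv_max_le {y d : ℝ} (hy : 0 < y) (hd : 0 < d) (N : ℕ) :
    ∑ j ∈ Finset.range N, (max y (j * d))⁻¹ ≤ y⁻¹ + d⁻¹ * (1 + Real.log N) := by
  rcases N with _ | n
  · rw [Finset.sum_range_zero, Nat.cast_zero, Real.log_zero]
    positivity
  rw [Finset.sum_range_succ', Nat.cast_zero, zero_mul, max_eq_left hy.le, add_comm]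
  gcongr
  calc ∑ j ∈ Finset.range n, (max y ((j + 1 : ℕ) * d))⁻¹
      ≤ ∑ j ∈ Finset.range n, (((j + 1 : ℕ) : ℝ) * d)⁻¹ :=
        Finset.sum_le_sum fun j _ => inv_anti₀ (by positivity) (le_max_right _ _)
    _ = d⁻¹ * harmonic n := by
        simp only [harmonic, Rat.cast_sum, Rat.cast_inv, Rat.cast_natCast, Finset.mul_sum, mul_inv,
          mul_comm]
    _ ≤ d⁻¹ * (1 + Real.log (n + 1 : ℕ)) := by
        gcongr
        calc (harmonic n : ℝ) ≤ harmonic (n + 1) := by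
              rw [harmonic_succ, Rat.cast_add]
              exact le_add_of_nonneg_right (by positivity)
          _ ≤ 1 + Real.log (n + 1 : ℕ) := harmonic_le_one_add_log _

theorem lintegral_norm_inv_sub_le {X : Set ℝ} {x y d m : ℝ} {N : ℕ} (hy : 0 < y)
    (hd : 0 < d) (hm : 0 ≤ m) (hN : 0 < N) (hX : X ⊆ Icc (x - N * d) (x + N * d))
    (hwin : ∀ w : ℝ, volume (X ∩ Icc w (w + d)) ≤ ENNReal.ofReal m) :
    ∫⁻ t in X, ENNReal.ofReal ‖((x : ℂ) + y * I - t)⁻¹‖ ≤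
      ENNReal.ofReal (2 * m * (y⁻¹ + d⁻¹ * (1 + Real.log N))) := by
  set W : ℕ → Set ℝ := fun j => {t | |t - x| ∈ Icc (j * d) (j * d + d)}
  have hcover : X ⊆ ⋃ j ∈ Finset.range N, W j := fun t ht => by
    obtain ⟨j, hj, htj⟩ := exists_lt_mem_Icc_mul_add hd (abs_nonneg (t - x))
      (abs_sub_le_iff.2 ⟨by linarith [(hX ht).2], by linarith [(hX ht).1]⟩) hN
    exact mem_iUnion₂.2 ⟨j, Finset.mem_range.2 hj, htj⟩
  have hpos : ∀ j : ℕ, 0 ≤ (max y (j * d))⁻¹ := fun j => by positivity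
  calc ∫⁻ t in X, ENNReal.ofReal ‖((x : ℂ) + y * I - t)⁻¹‖
      ≤ ∑ j ∈ Finset.range N, ENNReal.ofReal (max y (j * d))⁻¹ * volume (X ∩ W j) :=
        setLIntegral_le_sum_mul_measure _ hcover fun j _ t ht =>
          ENNReal.ofReal_le_ofReal (norm_inv_sub_le_inv_max hy ht.2.1)
    _ ≤ ∑ j ∈ Finset.range N, ENNReal.ofReal (max y (j * d))⁻¹ * (2 * ENNReal.ofReal m) := by
        gcongr with j
        exact volume_inter_abs_sub_mem_Icc_le hwin
    _ = ENNReal.ofReal (2 * m * ∑ j ∈ Finset.range N, (max y (j * d))⁻¹) := by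
        rw [ENNReal.ofReal_mul (by positivity), ENNReal.ofReal_mul zero_le_two,
          ENNReal.ofReal_ofNat, ENNReal.ofReal_sum_of_nonneg fun j _ => hpos j, Finset.mul_sum]
        simp only [mul_comm]
    _ ≤ ENNReal.ofReal (2 * m * (y⁻¹ + d⁻¹ * (1 + Real.log N))) := by
        gcongr
        exact sum_range_inv_max_le hy hd N

theorem norm_P_le_of_lintegral_le {X : Set ℝ} {z : ℂ} {C : ℝ} (hC : 0 ≤ C)
    (h : ∫⁻ t in X, ENNReal.ofReal ‖(z - t)⁻¹‖ ≤ ENNReal.ofReal C) : ‖P X z‖ ≤ C / Real.pi := by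
  have hint : ‖∫ t in X, (z - (t : ℂ))⁻¹‖ ≤ C :=
    (norm_integral_le_lintegral_norm _).trans (ENNReal.toReal_le_of_le_ofReal hC h)
  rw [P, norm_mul, norm_div, norm_I, norm_real, Real.norm_of_nonneg Real.pi_pos.le,
    one_div_mul_eq_div]
  gcongr

theorem P_small_on_horizontal_line_general (b η T : ℝ) (hb : 0 < b) (hη : 0 < η) (hT : 0 < T)
    (N : ℕ) (hN : 3 ≤ N) (X : Set ℝ) (hXb : X ⊆ Set.Icc 0 b)
    (hsmall : ∀ w : ℝ, volume (X ∩ Set.Icc w (w + b / N)) ≤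
      ENNReal.ofReal (η * b / (N * (1 + Real.log N))))
    (x : ℝ) (hx : x ∈ Set.Icc (0 : ℝ) b) :
    ‖P X ((x : ℂ) + (T * b * η / N : ℝ) * Complex.I)‖ ≤
      (1 / Real.pi) * (3 / T + 2 * η) := by
  have hN0 : (0 : ℝ) < N := by positivity
  have hlog : 0 ≤ Real.log N := Real.log_natCast_nonneg N
  have hNd : (N : ℝ) * (b / N) = b := mul_div_cancel₀ b hN0.ne'
  have hX' : X ⊆ Icc (x - N * (b / N)) (x + N * (b / N)) := fun t ht => by
    rw [hNd]
    exact ⟨by linarith [(hXb ht).1, hx.2], by linarith [(hXb ht).2, hx.1]⟩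
  have key := lintegral_norm_inv_sub_le (by positivity : 0 < T * b * η / N)
    (by positivity : 0 < b / N) (by positivity) (by omega) hX' hsmall
  have hsum : 2 * (η * b / (N * (1 + Real.log N))) *
      ((T * b * η / N)⁻¹ + (b / N)⁻¹ * (1 + Real.log N)) =
        2 / (T * (1 + Real.log N)) + 2 * η := by
    field_simp
  have hfirst : 2 / (T * (1 + Real.log N)) ≤ 3 / T :=
    calc 2 / (T * (1 + Real.log N)) ≤ 2 / T := by
          gcongr; exact le_mul_of_one_le_right hT.le (by linarith)
      _ ≤ 3 / T := by gcongr; norm_num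
  refine (norm_P_le_of_lintegral_le (by positivity) key).trans ?_
  rw [hsum, div_eq_mul_one_div _ Real.pi, mul_comm]
  exact mul_le_mul_of_nonneg_left (by linarith) (by positivity)

/-- Lemma 7: if `b, η, T > 0`, `N ≥ 3` and `X ⊆ [0,b]` is measurable with
`λ₁(X ∩ W) ≤ ηb/(N(1 + log N))` for every interval `W` of length `b/N`, then
`|P(X, x + (Tbη/N)i)| ≤ (1/π)(3/T + 2η)` for all `x ∈ [0,b]`. -/
theorem P_small_on_horizontal_line (b η T : ℝ) (hb : 0 < b) (hη : 0 < η) (hT : 0 < T)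
    (N : ℕ) (hN : 3 ≤ N) (X : Set ℝ) (hX : MeasurableSet X) (hXb : X ⊆ Set.Icc 0 b)
    (hsmall : ∀ w : ℝ, volume (X ∩ Set.Icc w (w + b / N)) ≤
      ENNReal.ofReal (η * b / (N * (1 + Real.log N))))
    (x : ℝ) (hx : x ∈ Set.Icc (0 : ℝ) b) :
    ‖P X ((x : ℂ) + (T * b * η / N : ℝ) * Complex.I)‖ ≤
      (1 / Real.pi) * (3 / T + 2 * η) :=
  P_small_on_horizontal_line_general b η T hb hη hT N hN X hXb hsmall x hx
end

section
/- Let 0 < β < 1/100 and I = (−1,1) \ [−β, β], and define P(z) = (i/π)∫_I dt/(z−t). Then for all real z ∈ (−β, β), Im P'(z) < −1/(2β). -/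
/-!
Differentiating under the integral sign (near a point `x` of the gap the integrand stays
uniformly away from its pole), `P'(x) = (i/π) ∫_I -(x - t)⁻² dt`, and this integral is
elementary: it equals `(1 + x)⁻¹ + (1 - x)⁻¹ - ((β + x)⁻¹ + (β - x)⁻¹)`, a real number.
The first two terms are below `3/2` each and the last two are at least `2/β` by the
harmonic–arithmetic mean inequality, so `Im P'(x) < (3 - 2/β)/π`, which is below `-1/(2β)`
because `π < 4 - 6β`.
-/

open Set MeasureTheory Complex

theorem hasDerivAt_integral_inv_sub {μ : Measure ℝ} [IsFiniteMeasure μ] {z₀ : ℂ} {δ : ℝ}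
    (hδ : 0 < δ) (hdist : ∀ᵐ (t : ℝ) ∂μ, δ ≤ ‖z₀ - (t : ℂ)‖) :
    HasDerivAt (fun z : ℂ => ∫ t, (z - (t : ℂ))⁻¹ ∂μ) (∫ t, -((z₀ - (t : ℂ)) ^ 2)⁻¹ ∂μ) z₀ := by
  have hball : ∀ᵐ (t : ℝ) ∂μ, ∀ z ∈ Metric.ball z₀ (δ / 2), δ / 2 ≤ ‖z - (t : ℂ)‖ := by
    filter_upwards [hdist] with t ht z hz
    linarith [norm_sub_le_norm_sub_add_norm_sub z₀ z (t : ℂ), mem_ball_iff_norm'.1 hz]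
  have hmeas : ∀ z : ℂ, AEStronglyMeasurable (fun t : ℝ => (z - t)⁻¹) μ := fun z =>
    (measurable_const.sub measurable_ofReal).inv.aestronglyMeasurable
  refine (hasDerivAt_integral_of_dominated_loc_of_deriv_le (bound := fun _ => ((δ / 2) ^ 2)⁻¹)
    (Metric.ball_mem_nhds z₀ (half_pos hδ)) (.of_forall hmeas) ?_
    (F' := fun z t => -((z - (t : ℂ)) ^ 2)⁻¹)
    ((measurable_const.sub measurable_ofReal).pow_const 2).inv.neg.aestronglyMeasurable
    ?_ (integrable_const _) ?_).2
  · refine (integrable_const δ⁻¹).mono' (hmeas z₀) ?_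
    filter_upwards [hdist] with t ht
    rw [norm_inv]
    exact inv_anti₀ hδ ht
  · filter_upwards [hball] with t ht z hz
    rw [norm_neg, norm_inv, norm_pow]
    exact inv_anti₀ (by positivity) (pow_le_pow_left₀ (by positivity) (ht z hz) 2)
  · filter_upwards [hball] with t ht z hz
    have hne : z - t ≠ 0 := norm_pos_iff.1 ((half_pos hδ).trans_le (ht z hz))
    exact ((hasDerivAt_inv hne).comp z ((hasDerivAt_id z).sub_const (t : ℂ))).congr_deriv
      (mul_one _)

theorem continuousOn_inv_ofReal_sub_sq {a b x : ℝ} (hx : x ∉ Icc a b) :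
    ContinuousOn (fun t : ℝ => (((x : ℂ) - t) ^ 2)⁻¹) (Icc a b) :=
  (ContinuousOn.pow (by fun_prop) 2).inv₀ fun t ht => pow_ne_zero _ <|
    sub_ne_zero.2 <| by exact_mod_cast fun h : x = t => hx (h ▸ ht)

theorem integral_Ioo_neg_inv_ofReal_sub_sq {a b x : ℝ} (hab : a ≤ b) (hx : x ∉ Icc a b) :
    ∫ t in Ioo a b, -(((x : ℂ) - t) ^ 2)⁻¹ = ((x : ℂ) - a)⁻¹ - ((x : ℂ) - b)⁻¹ := by
  rw [← integral_Ioc_eq_integral_Ioo, ← intervalIntegral.integral_of_le hab,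
    intervalIntegral.integral_neg, neg_eq_iff_eq_neg, neg_sub]
  refine intervalIntegral.integral_eq_sub_of_hasDerivAt (f := fun t : ℝ => ((x : ℂ) - t)⁻¹)
    (fun t ht => ?_) ((continuousOn_inv_ofReal_sub_sq hx).intervalIntegrable_of_Icc hab)
  rw [uIcc_of_le hab] at ht
  have hne : (x : ℂ) - t ≠ 0 := sub_ne_zero.2 <| by exact_mod_cast fun h : x = t => hx (h ▸ ht)
  exact ((hasDerivAt_inv hne).comp (t : ℂ)
    ((hasDerivAt_id (t : ℂ)).const_sub (x : ℂ))).comp_ofReal.congr_deriv (by ring)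

theorem Ioo_diff_Icc_eq_union {α : Type*} [LinearOrder α] {a b c d : α} (hcb : c ≤ b)
    (had : a ≤ d) : Ioo a b \ Icc c d = Ioo a c ∪ Ioo d b := by
  ext t
  simp only [mem_sdiff, mem_Ioo, mem_Icc, mem_union]
  grind

theorem integral_gap_neg_inv_ofReal_sub_sq {β x : ℝ} (hβ : β ≤ 1) (hx : x ∈ Ioo (-β) β) :
    ∫ t in Ioo (-1 : ℝ) 1 \ Icc (-β) β, -(((x : ℂ) - t) ^ 2)⁻¹ =
      (((1 + x)⁻¹ + (1 - x)⁻¹ - ((β + x)⁻¹ + (β - x)⁻¹) : ℝ) : ℂ) := by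
  obtain ⟨hx₁, hx₂⟩ := hx
  have hleft : x ∉ Icc (-1) (-β) := fun h => by linarith [h.2]
  have hright : x ∉ Icc β 1 := fun h => by linarith [h.1]
  have hint {a b : ℝ} (hx : x ∉ Icc a b) :
      IntegrableOn (fun t : ℝ => -(((x : ℂ) - t) ^ 2)⁻¹) (Ioo a b) :=
    ((continuousOn_inv_ofReal_sub_sq hx).integrableOn_Icc.mono_set Ioo_subset_Icc_self).neg
  rw [Ioo_diff_Icc_eq_union (by linarith) (by linarith),
    setIntegral_union (disjoint_left.2 fun t h₁ h₂ => by linarith [h₁.2, h₂.1])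
      measurableSet_Ioo (hint hleft) (hint hright),
    integral_Ioo_neg_inv_ofReal_sub_sq (by linarith) hleft,
    integral_Ioo_neg_inv_ofReal_sub_sq (by linarith) hright]
  push_cast
  rw [← neg_sub (β : ℂ), ← neg_sub (1 : ℂ), inv_neg, inv_neg]
  ring

theorem sub_abs_le_norm_ofReal_sub {β x t : ℝ} (ht : t ∉ Icc (-β) β) :
    β - |x| ≤ ‖(x : ℂ) - t‖ := by
  have hβt : β < |t| := lt_of_not_ge fun h => ht (abs_le.1 h)
  rw [← ofReal_sub, norm_real, Real.norm_eq_abs, abs_sub_comm]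
  linarith [abs_sub_abs_le_abs_sub t x]

theorem im_I_div_ofReal_mul_ofReal (a r : ℝ) : (I / (a : ℂ) * r).im = r / a := by
  rw [div_eq_mul_inv, ← ofReal_inv, mul_assoc, ← ofReal_mul, I_mul_im, ofReal_re, inv_mul_eq_div]

theorem four_div_add_le_inv_add_inv {a b : ℝ} (ha : 0 < a) (hb : 0 < b) :
    4 / (a + b) ≤ a⁻¹ + b⁻¹ := by
  rw [inv_add_inv ha.ne' hb.ne', div_le_div_iff₀ (by positivity) (by positivity)]
  nlinarith [sq_nonneg (a - b)]

theorem inv_one_add_add_inv_one_sub_sub_div_pi_lt {β x : ℝ} (hβ₀ : 0 < β) (hβ : β < 1 / 100)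
    (hx : x ∈ Ioo (-β) β) :
    ((1 + x)⁻¹ + (1 - x)⁻¹ - ((β + x)⁻¹ + (β - x)⁻¹)) / Real.pi < -(1 / (2 * β)) := by
  obtain ⟨hx₁, hx₂⟩ := hx
  have hgap : 2 / β ≤ (β + x)⁻¹ + (β - x)⁻¹ := by
    have := four_div_add_le_inv_add_inv (a := β + x) (b := β - x) (by linarith) (by linarith)
    rwa [show β + x + (β - x) = 2 * β by ring, show 4 / (2 * β) = 2 / β by field_simp; ring]
      at this
  have hplus : (1 + x)⁻¹ < 3 / 2 := by
    rw [inv_lt_iff_one_lt_mul₀ (by linarith)]; linarith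
  have hminus : (1 - x)⁻¹ < 3 / 2 := by
    rw [inv_lt_iff_one_lt_mul₀ (by linarith)]; linarith
  have hslack : -(1 / (2 * β)) * Real.pi = 3 - 2 / β + (4 - 6 * β - Real.pi) / (2 * β) := by
    field_simp
    ring
  have hpos : 0 < (4 - 6 * β - Real.pi) / (2 * β) :=
    div_pos (by linarith [Real.pi_lt_d2]) (by positivity)
  rw [div_lt_iff₀ Real.pi_pos, hslack]
  linarith

/-- For `0 < β < 1/100`, `I = (-1,1) \ [-β,β]` and real `x ∈ (-β,β)`,
`Im P'(I, x) < -1/(2β)`. -/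
theorem P_deriv_im_neg_on_gap (β : ℝ) (hβ0 : 0 < β) (hβ : β < 1 / 100)
    (x : ℝ) (hx : x ∈ Set.Ioo (-β) β) :
    (deriv (P (Set.Ioo (-1 : ℝ) 1 \ Set.Icc (-β) β)) (x : ℂ)).im < -(1 / (2 * β)) := by
  set X := Ioo (-1 : ℝ) 1 \ Icc (-β) β
  have hXmeas : MeasurableSet X := measurableSet_Ioo.diff measurableSet_Icc
  have : IsFiniteMeasure (volume.restrict X) :=
    isFiniteMeasure_restrict.2 ((measure_mono sdiff_subset).trans_lt measure_Ioo_lt_top).ne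
  have hdist : ∀ᵐ (t : ℝ) ∂volume.restrict X, β - |x| ≤ ‖(x : ℂ) - t‖ :=
    (ae_restrict_iff' hXmeas).2 (ae_of_all _ fun t ht => sub_abs_le_norm_ofReal_sub ht.2)
  have hP : HasDerivAt (P X) (I / Real.pi * ∫ t in X, -(((x : ℂ) - t) ^ 2)⁻¹) x :=
    (hasDerivAt_integral_inv_sub (sub_pos.2 (abs_lt.2 hx)) hdist).const_mul _
  rw [hP.deriv, integral_gap_neg_inv_ofReal_sub_sq (by linarith) hx, im_I_div_ofReal_mul_ofReal]
  exact inv_one_add_add_inv_one_sub_sub_div_pi_lt hβ0 hβ hx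
end

section
/- Let f₁ be holomorphic with nonvanishing derivative on the upper half-plane ℍ satisfying |f₁''(z)/f₁'(z)| ≤ 1/(2 Im z) for all z ∈ ℍ, let τ > 0, let p : ℍ → ℍ be holomorphic, and let f be holomorphic on ℍ with f'(z) = (f₁'(p(z)))^τ (via a fixed branch). Then |f''(z)/f'(z)| ≤ τ/(2 Im z) for all z ∈ ℍ. -/
/-!
Since `L` is a logarithm of `f₁' ∘ p`, its derivative is `(f₁''/f₁')(p z) · p'(z)`, and
`f''/f' = τ L'`. The Becker bound at `p z` contributes `1 / (2 Im p(z))` and the half-plane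
Schwarz–Pick inequality `|p'(z)| ≤ Im p(z) / Im z` cancels the `Im p(z)`. Schwarz–Pick itself
is the Schwarz lemma for the self-map of the unit disc obtained by conjugating `p` with
Möbius maps that send `z` and `p z` to `0`.
-/

open Set Complex ComplexConjugate Filter Metric

noncomputable def diskToHalfPlane (z u : ℂ) : ℂ := (z - conj z * u) / (1 - u)

noncomputable def halfPlaneToDisk (a w : ℂ) : ℂ := (w - a) / (w - conj a)

lemma norm_sub_conj (z : ℂ) : ‖z - conj z‖ = 2 * |z.im| := by
  rw [sub_conj, norm_mul, norm_I, norm_real, Real.norm_eq_abs, mul_one, abs_mul, abs_two]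

lemma im_diskToHalfPlane (z u : ℂ) :
    (diskToHalfPlane z u).im = z.im * (1 - normSq u) / normSq (1 - u) := by
  rw [diskToHalfPlane, div_im, div_sub_div_same]
  congr 1
  simp only [normSq_apply, sub_re, sub_im, mul_re, mul_im, conj_re, conj_im, one_re, one_im]
  ring

lemma im_diskToHalfPlane_pos {z u : ℂ} (hz : 0 < z.im) (hu : ‖u‖ < 1) :
    0 < (diskToHalfPlane z u).im := by
  have hu1 : 1 - u ≠ 0 := sub_ne_zero.mpr fun h => by simp [← h] at hu
  have hu2 : normSq u < 1 := by rw [normSq_eq_norm_sq]; nlinarith [norm_nonneg u]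
  rw [im_diskToHalfPlane]
  exact div_pos (mul_pos hz (by linarith)) (normSq_pos.mpr hu1)

lemma diskToHalfPlane_zero (z : ℂ) : diskToHalfPlane z 0 = z := by
  simp [diskToHalfPlane]

lemma differentiableAt_diskToHalfPlane (z : ℂ) {u : ℂ} (hu : u ≠ 1) :
    DifferentiableAt ℂ (diskToHalfPlane z) u := by
  unfold diskToHalfPlane
  fun_prop (disch := exact sub_ne_zero.mpr hu.symm)

lemma hasDerivAt_diskToHalfPlane_zero (z : ℂ) :
    HasDerivAt (diskToHalfPlane z) (z - conj z) 0 :=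
  ((((hasDerivAt_id (0 : ℂ)).const_mul (conj z)).const_sub z).div
    ((hasDerivAt_id (0 : ℂ)).const_sub 1) (by norm_num)).congr_deriv (by
      simp only [mul_one, id_eq, sub_zero, mul_zero, mul_neg, sub_neg_eq_add, one_pow, div_one]
      ring)

lemma halfPlaneToDisk_self (a : ℂ) : halfPlaneToDisk a a = 0 := by
  simp [halfPlaneToDisk]

lemma sub_conj_ne_zero {a w : ℂ} (ha : 0 < a.im) (hw : 0 < w.im) : w - conj a ≠ 0 := by
  intro h
  have := congrArg im h
  simp only [sub_im, conj_im, sub_neg_eq_add, zero_im] at this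
  linarith

lemma norm_halfPlaneToDisk_lt_one {a w : ℂ} (ha : 0 < a.im) (hw : 0 < w.im) :
    ‖halfPlaneToDisk a w‖ < 1 := by
  rw [halfPlaneToDisk, norm_div, div_lt_one (norm_pos_iff.mpr (sub_conj_ne_zero ha hw))]
  refine lt_of_pow_lt_pow_left₀ 2 (norm_nonneg _) ?_
  simp only [← normSq_eq_norm_sq, normSq_apply, sub_re, sub_im, conj_re, conj_im]
  nlinarith

lemma differentiableAt_halfPlaneToDisk (a : ℂ) {w : ℂ} (hw : w - conj a ≠ 0) :
    DifferentiableAt ℂ (halfPlaneToDisk a) w := by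
  unfold halfPlaneToDisk
  fun_prop (disch := exact hw)

lemma hasDerivAt_halfPlaneToDisk_self {a : ℂ} (ha : a - conj a ≠ 0) :
    HasDerivAt (halfPlaneToDisk a) (a - conj a)⁻¹ a :=
  (((hasDerivAt_id a).sub_const a).div ((hasDerivAt_id a).sub_const (conj a)) ha).congr_deriv
    (by simp [sq, div_mul_cancel_left₀ ha])

theorem norm_deriv_le_im_div_im_of_mapsTo {p : ℂ → ℂ}
    (hp : DifferentiableOn ℂ p {z : ℂ | 0 < z.im})
    (hmaps : MapsTo p {z : ℂ | 0 < z.im} {z : ℂ | 0 < z.im}) {z : ℂ} (hz : 0 < z.im) :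
    ‖deriv p z‖ ≤ (p z).im / z.im := by
  have hH := UpperHalfPlane.isOpen_upperHalfPlaneSet
  set a := p z with ha_def
  have ha : 0 < a.im := hmaps hz
  set g := halfPlaneToDisk a ∘ p ∘ diskToHalfPlane z
  have hq : ∀ u ∈ ball (0 : ℂ) 1, 0 < (diskToHalfPlane z u).im := fun u hu =>
    im_diskToHalfPlane_pos hz (mem_ball_zero_iff.mp hu)
  have hg_diff : DifferentiableOn ℂ g (ball 0 1) := fun u hu => by
    have hu1 : u ≠ 1 := by rintro rfl; simp at hu
    exact ((differentiableAt_halfPlaneToDisk a (sub_conj_ne_zero ha (hmaps (hq u hu)))).comp u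
      ((hp.differentiableAt (hH.mem_nhds (hq u hu))).comp u
        (differentiableAt_diskToHalfPlane z hu1))).differentiableWithinAt
  have hg_zero : g 0 = 0 := by
    simp only [g, Function.comp_apply, diskToHalfPlane_zero, ← ha_def, halfPlaneToDisk_self]
  have hg_maps : MapsTo g (ball 0 1) (closedBall (g 0) 1) := fun u hu => by
    rw [hg_zero, mem_closedBall_zero_iff]
    exact (norm_halfPlaneToDisk_lt_one ha (hmaps (hq u hu))).le
  have hg_deriv : HasDerivAt g ((a - conj a)⁻¹ * (deriv p z * (z - conj z))) 0 := by
    have hpq : HasDerivAt (p ∘ diskToHalfPlane z) (deriv p z * (z - conj z)) 0 := by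
      refine HasDerivAt.comp 0 ?_ (hasDerivAt_diskToHalfPlane_zero z)
      rw [diskToHalfPlane_zero]
      exact (hp.differentiableAt (hH.mem_nhds hz)).hasDerivAt
    refine HasDerivAt.comp 0 ?_ hpq
    rw [Function.comp_apply, diskToHalfPlane_zero]
    exact hasDerivAt_halfPlaneToDisk_self (sub_conj_ne_zero ha ha)
  have hschwarz := hg_deriv.deriv ▸ Complex.norm_deriv_le_one_of_mapsTo_ball hg_diff hg_maps one_pos
  rw [norm_mul, norm_mul, norm_inv, norm_sub_conj, norm_sub_conj, abs_of_pos ha,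
    abs_of_pos hz] at hschwarz
  rw [le_div_iff₀ hz]
  field_simp at hschwarz
  linarith

lemma logDeriv_cexp_comp {L : ℂ → ℂ} {z : ℂ} (hL : DifferentiableAt ℂ L z) :
    logDeriv (fun w => cexp (L w)) z = deriv L z := by
  rw [← Function.comp_def, logDeriv_comp differentiableAt_exp hL, logDeriv_exp, Pi.one_apply,
    one_mul]

theorem becker_halfplane_power_bound_general (f₁ : ℂ → ℂ)
    (hf₁ : DifferentiableOn ℂ f₁ {z : ℂ | 0 < z.im})
    (hBecker : ∀ z : ℂ, 0 < z.im →
      ‖deriv (deriv f₁) z / deriv f₁ z‖ ≤ 1 / (2 * z.im))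
    (τ : ℝ) (hτ : 0 < τ)
    (p : ℂ → ℂ) (hp : DifferentiableOn ℂ p {z : ℂ | 0 < z.im})
    (hpmaps : Set.MapsTo p {z : ℂ | 0 < z.im} {z : ℂ | 0 < z.im})
    (L : ℂ → ℂ) (hL : DifferentiableOn ℂ L {z : ℂ | 0 < z.im})
    (hLexp : ∀ z : ℂ, 0 < z.im → Complex.exp (L z) = deriv f₁ (p z))
    (f : ℂ → ℂ)
    (hf' : ∀ z : ℂ, 0 < z.im → deriv f z = Complex.exp ((τ : ℂ) * L z)) :
    ∀ z : ℂ, 0 < z.im →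
      ‖deriv (deriv f) z / deriv f z‖ ≤ τ / (2 * z.im) := by
  intro z hz
  have hH := UpperHalfPlane.isOpen_upperHalfPlaneSet
  have hpz : 0 < (p z).im := hpmaps hz
  have hLz : DifferentiableAt ℂ L z := hL.differentiableAt (hH.mem_nhds hz)
  have hL' : deriv L z = logDeriv (deriv f₁) (p z) * deriv p z := by
    rw [← logDeriv_cexp_comp hLz,
      (logDeriv_congr_nhds (eventually_of_mem (hH.mem_nhds hz) hLexp)).eq_of_nhds,
      ← Function.comp_def, logDeriv_comp ((hf₁.deriv hH).differentiableAt (hH.mem_nhds hpz))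
        (hp.differentiableAt (hH.mem_nhds hz))]
  have hf'' : deriv (deriv f) z / deriv f z = τ * deriv L z := by
    rw [← logDeriv_apply,
      (logDeriv_congr_nhds (eventually_of_mem (hH.mem_nhds hz) hf')).eq_of_nhds,
      logDeriv_cexp_comp (hLz.const_mul _), deriv_const_mul _ hLz]
  calc ‖deriv (deriv f) z / deriv f z‖
      = τ * (‖logDeriv (deriv f₁) (p z)‖ * ‖deriv p z‖) := by
        rw [hf'', hL', norm_mul, norm_mul, norm_real, Real.norm_of_nonneg hτ.le]
    _ ≤ τ * (1 / (2 * (p z).im) * ((p z).im / z.im)) := by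
        gcongr
        exacts [hBecker _ hpz, norm_deriv_le_im_div_im_of_mapsTo hp hpmaps hz]
    _ = τ / (2 * z.im) := by field_simp

/-- Lemma 9: if `f₁` is holomorphic on the upper half-plane with nonvanishing derivative
and `|f₁''(z)/f₁'(z)| ≤ 1/(2 Im z)`, `τ > 0`, `p : ℍ → ℍ` is holomorphic, and `f` is
holomorphic on `ℍ` with `f'(z) = (f₁'(p(z)))^τ` (via a fixed branch `L` of the logarithm of
`f₁' ∘ p`), then `|f''(z)/f'(z)| ≤ τ/(2 Im z)` on `ℍ`. -/
theorem becker_halfplane_power_bound (f₁ : ℂ → ℂ)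
    (hf₁ : DifferentiableOn ℂ f₁ {z : ℂ | 0 < z.im})
    (hf₁' : ∀ z : ℂ, 0 < z.im → deriv f₁ z ≠ 0)
    (hBecker : ∀ z : ℂ, 0 < z.im →
      ‖deriv (deriv f₁) z / deriv f₁ z‖ ≤ 1 / (2 * z.im))
    (τ : ℝ) (hτ : 0 < τ)
    (p : ℂ → ℂ) (hp : DifferentiableOn ℂ p {z : ℂ | 0 < z.im})
    (hpmaps : Set.MapsTo p {z : ℂ | 0 < z.im} {z : ℂ | 0 < z.im})
    (L : ℂ → ℂ) (hL : DifferentiableOn ℂ L {z : ℂ | 0 < z.im})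
    (hLexp : ∀ z : ℂ, 0 < z.im → Complex.exp (L z) = deriv f₁ (p z))
    (f : ℂ → ℂ) (hf : DifferentiableOn ℂ f {z : ℂ | 0 < z.im})
    (hf' : ∀ z : ℂ, 0 < z.im → deriv f z = Complex.exp ((τ : ℂ) * L z)) :
    ∀ z : ℂ, 0 < z.im →
      ‖deriv (deriv f) z / deriv f z‖ ≤ τ / (2 * z.im) :=
  becker_halfplane_power_bound_general f₁ hf₁ hBecker τ hτ p hp hpmaps L hL hLexp f hf'
end

section
/- Let f be holomorphic on a domain containing the closed upper half-plane, suppose f'(z) → b₀ ≠ 0 as |z| → ∞ in ℍ, and suppose |f'| ≤ M' on ℍ. Choose R with |f'(z) − b₀| < |b₀|/2 for |z| > R, z ∈ ℍ. Then for T > 4M'/|b₀| + 3: if z₁, z₂ ∈ closure(ℍ) are distinct with |z₂| ≥ TR, then f(z₁) ≠ f(z₂). -/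
open Set Complex Metric MeasureTheory

/-! Subtracting the linear part, `g z = f z - b₀ z` satisfies `‖g'‖ ≤ ‖b₀‖ / 2` off the closed disc
of radius `R` and `‖g'‖ ≤ M' + ‖b₀‖` everywhere on the closed half-plane (the bounds pass from `ℍ`
to its closure by continuity of `f'`), whereas `f z₁ = f z₂` would give
`‖g z₂ - g z₁‖ = ‖b₀‖ ‖z₂ - z₁‖`. If the segment `[z₁, z₂]` misses the disc, the mean value
inequality already contradicts this. Otherwise `‖z₂ - z₁‖ ≥ (T - 1) R`, and integrating `g'` along
the segment, the parameters at which it lies in the disc have measure at most `2R / ‖z₂ - z₁‖`;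
the choice of `T` makes the resulting bound smaller than `‖b₀‖ ‖z₂ - z₁‖`. -/

theorem norm_sub_le_of_norm_deriv_le_on_inter_sdiff {E : Type*} [NormedAddCommGroup E]
    [NormedSpace ℝ E] [CompleteSpace E] {φ φ' : ℝ → E} {a b C ε : ℝ} {K : Set ℝ} (hab : a ≤ b)
    (hK : MeasurableSet K) (hφ : ∀ t ∈ Icc a b, HasDerivAt φ (φ' t) t)
    (hint : IntervalIntegrable φ' volume a b) (hC : ∀ t ∈ Ioc a b ∩ K, ‖φ' t‖ ≤ C)
    (hε : ∀ t ∈ Ioc a b \ K, ‖φ' t‖ ≤ ε) :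
    ‖φ b - φ a‖ ≤ C * volume.real (Ioc a b ∩ K) + ε * volume.real (Ioc a b \ K) := by
  have hFTC : ∫ t in Ioc a b, φ' t = φ b - φ a := by
    rw [← intervalIntegral.integral_of_le hab]
    exact intervalIntegral.integral_eq_sub_of_hasDerivAt (by rwa [uIcc_of_le hab]) hint
  rw [← hFTC, ← integral_inter_add_sdiff hK hint.1]
  calc _ ≤ ‖∫ t in Ioc a b ∩ K, φ' t‖ + ‖∫ t in Ioc a b \ K, φ' t‖ := norm_add_le _ _
    _ ≤ _ := add_le_add
      (norm_setIntegral_le_of_norm_le_const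
        ((measure_mono inter_subset_left).trans_lt measure_Ioc_lt_top) hC)
      (norm_setIntegral_le_of_norm_le_const
        ((measure_mono sdiff_subset).trans_lt measure_Ioc_lt_top) hε)

theorem volume_real_inter_preimage_closedBall_mul_norm_le {E : Type*} [SeminormedAddCommGroup E]
    [NormedSpace ℝ E] (s : Set ℝ) (x v : E) {R : ℝ} (hR : 0 ≤ R) :
    volume.real (s ∩ {t : ℝ | ‖x + t • v‖ ≤ R}) * ‖v‖ ≤ 2 * R := by
  rcases (norm_nonneg v).eq_or_lt with hv | hv
  · rw [← hv, mul_zero]; positivity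
  have hdist : ∀ t ∈ s ∩ {t : ℝ | ‖x + t • v‖ ≤ R}, ∀ u ∈ s ∩ {t : ℝ | ‖x + t • v‖ ≤ R},
      dist t u ≤ 2 * R / ‖v‖ := by
    rintro t ⟨-, ht⟩ u ⟨-, hu⟩
    rw [le_div_iff₀ hv, Real.dist_eq, ← Real.norm_eq_abs, ← norm_smul, sub_smul,
      ← add_sub_add_left_eq_sub _ _ x]
    exact (norm_sub_le _ _).trans (by simp only [mem_ofPred_eq] at ht hu; linarith)
  rw [← le_div_iff₀ hv]
  exact ENNReal.toReal_le_of_le_ofReal (by positivity)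
    ((Real.volume_le_diam _).trans (ediam_le_of_forall_dist_le hdist))

theorem norm_sub_le_of_norm_deriv_le_off_closedBall {F : Type*} [NormedAddCommGroup F]
    [NormedSpace ℂ F] [CompleteSpace F] {g g' : ℂ → F} {s : Set ℂ} (hs : Convex ℝ s)
    (hg : ∀ z ∈ s, HasDerivAt g (g' z) z) (hg' : ContinuousOn g' s) {C ε R : ℝ} (hR : 0 ≤ R)
    (hεC : ε ≤ C) (hC : ∀ z ∈ s, ‖g' z‖ ≤ C) (hε : ∀ z ∈ s, R < ‖z‖ → ‖g' z‖ ≤ ε)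
    {x y : ℂ} (hx : x ∈ s) (hy : y ∈ s) :
    ‖g y - g x‖ ≤ ε * ‖y - x‖ + 2 * (C - ε) * R := by
  set v := y - x
  set γ : ℝ → ℂ := fun t => x + t • v
  set K := {t : ℝ | ‖x + t • v‖ ≤ R}
  have hγs : ∀ t ∈ Icc (0 : ℝ) 1, γ t ∈ s := fun t ht => hs.add_smul_sub_mem hx hy ht
  have hγ : Continuous γ := by fun_prop
  have hderiv : ∀ t ∈ Icc (0 : ℝ) 1, HasDerivAt (g ∘ γ) (v • g' (γ t)) t := fun t ht =>
    (hg _ (hγs t ht)).scomp t (((hasDerivAt_id t).smul_const v).const_add x |>.congr_deriv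
      (one_smul ℝ v))
  have hint : IntervalIntegrable (fun t => v • g' (γ t)) volume 0 1 :=
    ContinuousOn.intervalIntegrable (continuousOn_const.smul (hg'.comp hγ.continuousOn
      (by rwa [uIcc_of_le zero_le_one])))
  have hK : MeasurableSet K := (isClosed_le (by fun_prop) continuous_const).measurableSet
  have hsplit := norm_sub_le_of_norm_deriv_le_on_inter_sdiff zero_le_one hK hderiv hint
    (C := C * ‖v‖) (ε := ε * ‖v‖)
    (fun t ht => by
      rw [norm_smul, mul_comm]
      exact mul_le_mul_of_nonneg_right (hC _ (hγs t (Ioc_subset_Icc_self ht.1))) (norm_nonneg _))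
    (fun t ht => by
      rw [norm_smul, mul_comm]
      exact mul_le_mul_of_nonneg_right (hε _ (hγs t (Ioc_subset_Icc_self ht.1))
        (not_le.mp ht.2)) (norm_nonneg _))
  have hvol : volume.real (Ioc (0 : ℝ) 1 \ K) = 1 - volume.real (Ioc (0 : ℝ) 1 ∩ K) := by
    have := measureReal_inter_add_sdiff (μ := volume) (s := Ioc (0 : ℝ) 1) hK measure_Ioc_lt_top.ne
    rw [Real.volume_real_Ioc_of_le zero_le_one] at this
    linarith
  have hshort := volume_real_inter_preimage_closedBall_mul_norm_le (Ioc 0 1) x v hR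
  calc ‖g y - g x‖ = ‖(g ∘ γ) 1 - (g ∘ γ) 0‖ := by simp [γ, v]
    _ ≤ C * ‖v‖ * volume.real (Ioc (0 : ℝ) 1 ∩ K) + ε * ‖v‖ * volume.real (Ioc (0 : ℝ) 1 \ K) :=
      hsplit
    _ = ε * ‖v‖ + (C - ε) * (volume.real (Ioc (0 : ℝ) 1 ∩ K) * ‖v‖) := by rw [hvol]; ring
    _ ≤ ε * ‖v‖ + 2 * (C - ε) * R := by nlinarith

theorem Convex.apply_ne_apply_of_deriv_near_const {f f' : ℂ → ℂ} {s : Set ℂ} (hs : Convex ℝ s)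
    (hf : ∀ z ∈ s, HasDerivAt f (f' z) z) (hf' : ContinuousOn f' s) {b : ℂ} (hb : b ≠ 0)
    {M R T : ℝ} (hR : 0 < R) (hbound : ∀ z ∈ s, ‖f' z‖ ≤ M)
    (hnear : ∀ z ∈ s, R < ‖z‖ → ‖f' z - b‖ ≤ ‖b‖ / 2) (hT : 4 * M / ‖b‖ + 3 < T)
    {x y : ℂ} (hx : x ∈ s) (hy : y ∈ s) (hxy : x ≠ y) (hyT : T * R ≤ ‖y‖) : f x ≠ f y := by
  intro heq
  have hM : 0 ≤ M := (norm_nonneg _).trans (hbound x hx)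
  have hB : 0 < ‖b‖ := norm_pos_iff.mpr hb
  have hL : 0 < ‖y - x‖ := norm_pos_iff.mpr (sub_ne_zero.mpr hxy.symm)
  have hTB : 4 * M < (T - 3) * ‖b‖ := (div_lt_iff₀ hB).mp (by linarith)
  have hg : ∀ z ∈ s, HasDerivAt (fun w => f w - b * w) (f' z - b) z := fun z hz =>
    (hf z hz).sub (((hasDerivAt_id z).const_mul b).congr_deriv (mul_one b))
  have hgap : ‖(f y - b * y) - (f x - b * x)‖ = ‖b‖ * ‖y - x‖ := by
    rw [heq, sub_sub_sub_cancel_left, ← mul_sub, norm_mul, norm_sub_rev]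
  by_cases hmeet : ∃ p ∈ segment ℝ x y, ‖p‖ ≤ R
  · obtain ⟨p, hp, hpR⟩ := hmeet
    have hlong : (T - 1) * R ≤ ‖y - x‖ := by
      have := dist_add_dist_of_mem_segment hp
      rw [dist_eq_norm, dist_eq_norm, dist_eq_norm] at this
      linarith [norm_sub_norm_le y p, norm_nonneg (x - p), norm_sub_rev y x, norm_sub_rev p y]
    have hest := norm_sub_le_of_norm_deriv_le_off_closedBall hs hg (hf'.sub continuousOn_const)
      hR.le (C := M + ‖b‖) (ε := ‖b‖ / 2) (by linarith)
      (fun z hz => (norm_sub_le _ _).trans (by linarith [hbound z hz])) hnear hx hy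
    rw [hgap] at hest
    nlinarith
  · push Not at hmeet
    have hest := (convex_segment x y).norm_image_sub_le_of_norm_hasDerivWithin_le
      (fun z hz => (hg z (hs.segment_subset hx hy hz)).hasDerivWithinAt)
      (fun z hz => hnear z (hs.segment_subset hx hy hz) (hmeet z hz))
      (left_mem_segment ℝ x y) (right_mem_segment ℝ x y)
    rw [hgap] at hest
    nlinarith

theorem separation_far_away_general (U : Set ℂ) (hU : IsOpen U)
    (hUH : closure {z : ℂ | 0 < z.im} ⊆ U)
    (f : ℂ → ℂ) (hf : DifferentiableOn ℂ f U)
    (b₀ : ℂ) (hb₀ : b₀ ≠ 0) (M' : ℝ)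
    (hbound : ∀ z : ℂ, 0 < z.im → ‖deriv f z‖ ≤ M')
    (R : ℝ) (hR : 0 < R)
    (hnear : ∀ z : ℂ, 0 < z.im → R < ‖z‖ →
      ‖deriv f z - b₀‖ < ‖b₀‖ / 2)
    (T : ℝ) (hT : 4 * M' / ‖b₀‖ + 3 < T) :
    ∀ z₁ ∈ closure {z : ℂ | 0 < z.im}, ∀ z₂ ∈ closure {z : ℂ | 0 < z.im},
      z₁ ≠ z₂ → T * R ≤ ‖z₂‖ → f z₁ ≠ f z₂ := by
  intro z₁ hz₁ z₂ hz₂ hne hTR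
  have hcont : ContinuousOn (deriv f) (closure {z : ℂ | 0 < z.im}) :=
    (hf.analyticOnNhd hU).deriv.continuousOn.mono hUH
  refine (convex_halfSpace_im_gt 0).closure.apply_ne_apply_of_deriv_near_const
    (fun z hz => (hf.differentiableAt (hU.mem_nhds (hUH hz))).hasDerivAt) hcont hb₀ hR
    (fun z hz => ((hcont z hz).mono subset_closure).norm.closure_le hz continuousWithinAt_const
      hbound) (fun z hz hRz => ?_) hT hz₁ hz₂ hne hTR
  have hz' : z ∈ closure ({w : ℂ | R < ‖w‖} ∩ {w : ℂ | 0 < w.im}) :=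
    (isOpen_lt continuous_const continuous_norm).inter_closure ⟨hRz, hz⟩
  exact (((hcont z hz).mono (subset_closure.trans' inter_subset_right)).sub
    continuousWithinAt_const).norm.closure_le hz' continuousWithinAt_const
    fun w hw => (hnear w hw.2 hw.1).le

/-- If `f` is holomorphic on an open set containing the closed upper half-plane,
`|f'| ≤ M'` on `ℍ`, `|f'(z) - b₀| < |b₀|/2` for `z ∈ ℍ` with `|z| > R`, and
`T > 4M'/|b₀| + 3`, then `f` separates any two distinct points `z₁, z₂` of the closed
upper half-plane with `|z₂| ≥ TR`. -/
theorem separation_far_away (U : Set ℂ) (hU : IsOpen U)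
    (hUH : closure {z : ℂ | 0 < z.im} ⊆ U)
    (f : ℂ → ℂ) (hf : DifferentiableOn ℂ f U)
    (b₀ : ℂ) (hb₀ : b₀ ≠ 0) (M' : ℝ) (hM' : 0 < M')
    (hbound : ∀ z : ℂ, 0 < z.im → ‖deriv f z‖ ≤ M')
    (R : ℝ) (hR : 0 < R)
    (hnear : ∀ z : ℂ, 0 < z.im → R < ‖z‖ →
      ‖deriv f z - b₀‖ < ‖b₀‖ / 2)
    (T : ℝ) (hT : 4 * M' / ‖b₀‖ + 3 < T) :
    ∀ z₁ ∈ closure {z : ℂ | 0 < z.im}, ∀ z₂ ∈ closure {z : ℂ | 0 < z.im},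
      z₁ ≠ z₂ → T * R ≤ ‖z₂‖ → f z₁ ≠ f z₂ :=
  separation_far_away_general U hU hUH f hf b₀ hb₀ M' hbound R hR hnear T hT
end

section
/- Let f be holomorphic and locally injective on the closed upper half-plane, injective on ℍ + s₀ i, and suppose for each s ∈ (0, s₀) there exist distinct points aₛ, bₛ in a fixed compact set K ∩ (closure(ℍ) + si) with f(aₛ) = f(bₛ). Then there exist distinct points a, b ∈ ℝ + s₀ i with f(a) = f(b). -/
open Set Complex Filter Topology

/-- Auxiliary lemma: under the hypotheses, no coincidence pair can have one point
strictly above the line `Im = s₀`. -/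
lemma aux_no_high_point (U : Set ℂ) (hU : IsOpen U)
    (hUH : closure {z : ℂ | 0 < z.im} ⊆ U)
    (f : ℂ → ℂ) (hf : DifferentiableOn ℂ f U)
    (hloc : ∀ z ∈ closure {z : ℂ | 0 < z.im}, ∃ V ∈ nhds z, Set.InjOn f V)
    (s₀ : ℝ) (hs₀ : 0 < s₀)
    (hinj : Set.InjOn f {z : ℂ | s₀ < z.im})
    (a b : ℂ) (hab : a ≠ b) (ha : s₀ ≤ a.im) (hb : s₀ < b.im) (hfab : f a = f b) :
    False := by
  have haU : a ∈ U := hUH (subset_closure (by simp; linarith))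
  have hbU : b ∈ U := hUH (subset_closure (by simp; linarith))
  have hcb : AnalyticAt ℂ f b := hf.analyticAt (hU.mem_nhds hbU)
  have hconta : ContinuousAt f a := (hf.continuousOn.continuousAt (hU.mem_nhds haU))
  -- f is not locally constant at b
  have hnc : ¬ (∀ᶠ z in 𝓝 b, f z = f b) := by
    intro h
    obtain ⟨V, hV, hVinj⟩ := hloc b (subset_closure (by simp; linarith))
    obtain ⟨r, hr, hball⟩ := Metric.mem_nhds_iff.mp (Filter.inter_mem hV h)
    have h1 : (b : ℂ) ∈ Metric.ball b r := Metric.mem_ball_self hr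
    have h2 : (b + r/2 : ℂ) ∈ Metric.ball b r := by
      simp [Complex.dist_eq]
      rw [abs_of_pos (by positivity)]
      linarith
    have e1 := hball h1
    have e2 := hball h2
    have : (b + r/2 : ℂ) = b := hVinj e2.1 e1.1 (e2.2.trans e1.2.symm)
    have : (r/2 : ℂ) = 0 := by
      have := congrArg (· - b) this; simpa using this
    have : (r/2 : ℝ) = 0 := by exact_mod_cast congrArg Complex.re this
    linarith
  have hopen : 𝓝 (f b) ≤ Filter.map f (𝓝 b) :=
    (hcb.eventually_constant_or_nhds_le_map_nhds).resolve_left hnc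
  -- ε small
  set ε : ℝ := min (dist a b / 3) (b.im - s₀) with hε
  have hεpos : 0 < ε := by
    apply lt_min
    · have : 0 < dist a b := dist_pos.mpr hab
      linarith
    · linarith
  -- the set near b
  set S : Set ℂ := Metric.ball b ε ∩ {z : ℂ | s₀ < z.im} with hS
  have hSnb : S ∈ 𝓝 b := Filter.inter_mem (Metric.ball_mem_nhds b hεpos)
      ((isOpen_lt continuous_const Complex.continuous_im).mem_nhds hb)
  have himg : f '' S ∈ 𝓝 (f a) := by
    rw [hfab]
    exact hopen (Filter.image_mem_map hSnb)
  -- f a is in the closure of f '' (ball a ε ∩ {Im > s₀})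
  set T : Set ℂ := Metric.ball a ε ∩ {z : ℂ | s₀ < z.im} with hT
  have hmem : f a ∈ closure (f '' T) := by
    have htend : Filter.Tendsto (fun t : ℝ => a + t * Complex.I) (𝓝[>] (0:ℝ)) (𝓝 a) := by
      have : Filter.Tendsto (fun t : ℝ => a + t * Complex.I) (𝓝 (0:ℝ)) (𝓝 a) := by
        have hc : Continuous (fun t : ℝ => a + t * Complex.I) :=
          continuous_const.add (Complex.continuous_ofReal.mul continuous_const)
        simpa using hc.tendsto (0:ℝ)
      exact this.mono_left nhdsWithin_le_nhds
    have hftend : Filter.Tendsto (fun t : ℝ => f (a + t * Complex.I)) (𝓝[>] (0:ℝ)) (𝓝 (f a)) :=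
      hconta.tendsto.comp htend
    apply mem_closure_of_tendsto hftend
    filter_upwards [Ioo_mem_nhdsGT_of_mem (by exact ⟨le_refl _, hεpos⟩ : (0:ℝ) ∈ Ico 0 ε)]
      with t ht
    refine Set.mem_image_of_mem f ⟨?_, ?_⟩
    · rw [Metric.mem_ball, Complex.dist_eq,
        show a + t * Complex.I - a = (t : ℂ) * Complex.I by ring]
      rw [norm_mul, Complex.norm_I, mul_one, Complex.norm_real, Real.norm_eq_abs, abs_of_pos ht.1]
      exact ht.2
    · show s₀ < (a + ↑t * Complex.I).im
      have him : (a + ↑t * Complex.I).im = a.im + t := by simp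
      rw [him]; linarith [ht.1]
  -- intersect
  obtain ⟨c, hc1, hc2⟩ := mem_closure_iff_nhds.mp hmem (f '' S) himg
  obtain ⟨w, hwS, hwc⟩ := hc1
  obtain ⟨z, hzT, hzc⟩ := hc2
  have hzw : z ≠ w := by
    intro h
    have h1 : dist z a < ε := Metric.mem_ball.mp hzT.1
    have h2 : dist w b < ε := Metric.mem_ball.mp hwS.1
    have h3 : ε ≤ dist a b / 3 := min_le_left _ _
    have h4 : dist a b ≤ dist a z + dist z b := dist_triangle _ _ _
    have h5 : dist z b = dist w b := by rw [h]
    rw [dist_comm a z] at h4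
    have hd : 0 < dist a b := dist_pos.mpr hab
    linarith
  exact hzw (hinj hzT.2 hwS.2 (hzc.trans hwc.symm))

/-- If `f` is holomorphic on an open neighborhood of the closed upper half-plane, locally
injective there, injective on `{Im z > s₀}`, and for every `s ∈ (0, s₀)` there are distinct
points `a, b` in a fixed compact set `K` with `Im a, Im b ≥ s` and `f(a) = f(b)`, then
there exist distinct points `a, b` with `Im a = Im b = s₀` and `f(a) = f(b)`. -/
theorem coincidence_on_critical_line (U : Set ℂ) (hU : IsOpen U)
    (hUH : closure {z : ℂ | 0 < z.im} ⊆ U)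
    (f : ℂ → ℂ) (hf : DifferentiableOn ℂ f U)
    (hloc : ∀ z ∈ closure {z : ℂ | 0 < z.im}, ∃ V ∈ nhds z, Set.InjOn f V)
    (s₀ : ℝ) (hs₀ : 0 < s₀)
    (hinj : Set.InjOn f {z : ℂ | s₀ < z.im})
    (K : Set ℂ) (hK : IsCompact K)
    (hpairs : ∀ s ∈ Set.Ioo (0 : ℝ) s₀, ∃ a ∈ K, ∃ b ∈ K,
      a ≠ b ∧ s ≤ a.im ∧ s ≤ b.im ∧ f a = f b) :
    ∃ a b : ℂ, a ≠ b ∧ a.im = s₀ ∧ b.im = s₀ ∧ f a = f b := by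
  -- sequence of levels
  set t : ℕ → ℝ := fun n => s₀ - s₀ / (n + 2) with ht
  have htmem : ∀ n, t n ∈ Set.Ioo (0:ℝ) s₀ := by
    intro n
    constructor
    · have h1 : s₀ / (n + 2) < s₀ := by
        rw [div_lt_iff₀ (by positivity)]
        nlinarith [Nat.cast_nonneg (α := ℝ) n]
      simpa [ht] using by linarith
    · have : 0 < s₀ / (n + 2) := by positivity
      simp [ht]; linarith
  have httend : Filter.Tendsto t atTop (𝓝 s₀) := by
    have h1 : Filter.Tendsto (fun n : ℕ => s₀ / (n + 2)) atTop (𝓝 0) := by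
      apply Filter.Tendsto.div_atTop tendsto_const_nhds
      exact tendsto_atTop_add_const_right _ 2 tendsto_natCast_atTop_atTop
    have := tendsto_const_nhds (x := s₀) (f := atTop (α := ℕ)) |>.sub h1
    simpa using this
  choose aa haaK bb hbbK hne hima himb hfeq using fun n => hpairs (t n) (htmem n)
  obtain ⟨⟨A, B⟩, hABK, φ, hφ, hconv⟩ :=
    (hK.prod hK).tendsto_subseq (x := fun n => (aa n, bb n)) (fun n => ⟨haaK n, hbbK n⟩)
  rw [nhds_prod_eq, Filter.tendsto_prod_iff'] at hconv
  obtain ⟨hAconv, hBconv⟩ := hconv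
  have hφtop : Filter.Tendsto φ atTop atTop := hφ.tendsto_atTop
  have httendφ : Filter.Tendsto (t ∘ φ) atTop (𝓝 s₀) := httend.comp hφtop
  -- Im A ≥ s₀, Im B ≥ s₀
  have hAim : s₀ ≤ A.im :=
    le_of_tendsto_of_tendsto httendφ ((Complex.continuous_im.tendsto A).comp hAconv)
      (Filter.Eventually.of_forall fun n => hima (φ n))
  have hBim : s₀ ≤ B.im :=
    le_of_tendsto_of_tendsto httendφ ((Complex.continuous_im.tendsto B).comp hBconv)
      (Filter.Eventually.of_forall fun n => himb (φ n))
  have hAU : A ∈ U := hUH (subset_closure (by simp; linarith))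
  have hBU : B ∈ U := hUH (subset_closure (by simp; linarith))
  have hcA : ContinuousAt f A := hf.continuousOn.continuousAt (hU.mem_nhds hAU)
  have hcB : ContinuousAt f B := hf.continuousOn.continuousAt (hU.mem_nhds hBU)
  have hfAB : f A = f B := by
    have h1 : Filter.Tendsto (fun n => f (aa (φ n))) atTop (𝓝 (f A)) := hcA.tendsto.comp hAconv
    have h2 : Filter.Tendsto (fun n => f (bb (φ n))) atTop (𝓝 (f B)) := hcB.tendsto.comp hBconv
    have : (fun n => f (aa (φ n))) = fun n => f (bb (φ n)) := funext fun n => hfeq (φ n)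
    rw [this] at h1
    exact tendsto_nhds_unique h1 h2
  have hABne : A ≠ B := by
    intro h
    subst h
    obtain ⟨V, hV, hVinj⟩ := hloc A (subset_closure (by simp; linarith))
    have h1 : ∀ᶠ n in atTop, aa (φ n) ∈ V := hAconv.eventually (eventually_mem_nhds_iff.mpr hV |>.mono fun x hx => mem_of_mem_nhds hx)
    have h2 : ∀ᶠ n in atTop, bb (φ n) ∈ V := hBconv.eventually (eventually_mem_nhds_iff.mpr hV |>.mono fun x hx => mem_of_mem_nhds hx)
    obtain ⟨n, hn1, hn2⟩ := (h1.and h2).exists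
    exact hne (φ n) (hVinj hn1 hn2 (hfeq (φ n)))
  -- rule out Im > s₀
  have hA_eq : A.im = s₀ := by
    rcases eq_or_lt_of_le hAim with h | h
    · exact h.symm
    · exact absurd (aux_no_high_point U hU hUH f hf hloc s₀ hs₀ hinj B A hABne.symm hBim h hfAB.symm) not_false
  have hB_eq : B.im = s₀ := by
    rcases eq_or_lt_of_le hBim with h | h
    · exact h.symm
    · exact absurd (aux_no_high_point U hU hUH f hf hloc s₀ hs₀ hinj A B hABne hAim h hfAB) not_false
  exact ⟨A, B, hABne, hA_eq, hB_eq, hfAB⟩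
end
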